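/- Assume p ≡ 1 (mod 4). Then for every τ ∈ K̄ and every σ ∈ K one has τστ⁻¹ = σ⁻¹; equivalently, τ(a·z) = a⁻¹ · τ(z) for all a ∈ R and all z ∈ (ℤ/p)*. -/

import Mathlib

instance (X : Type*) [DecidableEq X] : DecidableEq (OnePoint X) :=
  inferInstanceAs (DecidableEq (Option X))

/-- The translation `z ↦ z + a` on `ℤ/p ∪ {∞}`, fixing `∞`. -/
def ptrans (p : ℕ) (a : ZMod p) : Equiv.Perm (OnePoint (ZMod p)) :=
  Equiv.optionCongr (Equiv.addRight a)

/-- The map `z ↦ a z` on `ℤ/p ∪ {∞}`, fixing `∞`, for `a ≠ 0`. -/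
def pmul (p : ℕ) [Fact p.Prime] (a : ZMod p) (ha : a ≠ 0) : Equiv.Perm (OnePoint (ZMod p)) :=
  Equiv.optionCongr (Equiv.mulLeft₀ a ha)

/-- Multiplication by `a` extended to `ℤ/p ∪ {∞}` (with `a·∞ = ∞`). -/
def opSmul (p : ℕ) (a : ZMod p) : OnePoint (ZMod p) → OnePoint (ZMod p) :=
  fun x => Option.map (fun z => a * z) x

/-- Underlying function of the map `z ↦ -1/z`. -/
def negInvFun (p : ℕ) : OnePoint (ZMod p) → OnePoint (ZMod p)
  | Option.none => Option.some (0 : ZMod p)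
  | Option.some z => if z = 0 then Option.none else Option.some (-z⁻¹ : ZMod p)

/-- The permutation `z ↦ -1/z` of `ℤ/p ∪ {∞}` (sending `0 ↦ ∞` and `∞ ↦ 0`). -/
def negInvPerm (p : ℕ) [Fact p.Prime] : Equiv.Perm (OnePoint (ZMod p)) :=
  Function.Involutive.toPerm (negInvFun p) (by
    intro x
    match x with
    | Option.none => simp [negInvFun] <;> rfl
    | Option.some z =>
      by_cases hz : z = 0
      · simp [negInvFun, hz] <;> rfl
      · have h1 : (-z⁻¹ : ZMod p) ≠ 0 := by simp [hz]
        (simp [negInvFun, hz, h1, inv_neg, inv_inv] <;> rfl))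

/-- The involution `(0 ∞)(1 3)(2 6)(4 5)`. -/
def inv1 (p : ℕ) : Equiv.Perm (OnePoint (ZMod p)) :=
  Equiv.swap ((0 : ZMod p) : OnePoint (ZMod p)) OnePoint.infty *
  Equiv.swap ((1 : ZMod p) : OnePoint (ZMod p)) ((3 : ZMod p) : OnePoint (ZMod p)) *
  Equiv.swap ((2 : ZMod p) : OnePoint (ZMod p)) ((6 : ZMod p) : OnePoint (ZMod p)) *
  Equiv.swap ((4 : ZMod p) : OnePoint (ZMod p)) ((5 : ZMod p) : OnePoint (ZMod p))

/-- The involution `(0 ∞)(1 5)(2 3)(4 6)`. -/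
def inv2 (p : ℕ) : Equiv.Perm (OnePoint (ZMod p)) :=
  Equiv.swap ((0 : ZMod p) : OnePoint (ZMod p)) OnePoint.infty *
  Equiv.swap ((1 : ZMod p) : OnePoint (ZMod p)) ((5 : ZMod p) : OnePoint (ZMod p)) *
  Equiv.swap ((2 : ZMod p) : OnePoint (ZMod p)) ((3 : ZMod p) : OnePoint (ZMod p)) *
  Equiv.swap ((4 : ZMod p) : OnePoint (ZMod p)) ((6 : ZMod p) : OnePoint (ZMod p))

/-- The set of nonzero squares in `ℤ/p`. -/
def Rset (p : ℕ) : Set (ZMod p) := {a | a ≠ 0 ∧ IsSquare a}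

/-- The set of nonsquares in `(ℤ/p)*`. -/
def Nset (p : ℕ) : Set (ZMod p) := {a | a ≠ 0 ∧ ¬ IsSquare a}

/-!
Orbit–stabilizer gives `|G_∞| = p (p - 1) / 2` and `|K| = (p - 1) / 2`. The translations form a
subgroup of `G_∞` of index `< p`, so they contain every element of order `p` of `G_∞`; hence `G_∞`
normalises them and every element of `K` is a dilation `z ↦ c z`. As `|K|` is even when
`p ≡ 1 (mod 4)`, the dilation `z ↦ -z` lies in `K`.

For `τ ∈ K̄` write `τ z = f z` on `(ℤ/p)*`. Conjugating `z ↦ -z` by `τ`, and noting that `τ²` and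
`τ' τ⁻¹` lie in `K` for `τ' = t_{-f (f b)} τ t_{f b} τ t_{-b} ∈ K̄`, shows that `f` is odd, that
`f ∘ f = e • id`, and that `f (f (y - b) + f b) - f (f b) = D_b f y`. Eliminating the unknown
constants between two instances of the last relation leaves
`(ω f α - α f ω) f (ω + α) = (ω - α) f ω f α`, whose cases `α = ±1` force `f z = f 1 / z`.
Thus `τ` is `z ↦ k / z`, which inverts every dilation.
-/

open Equiv MulAction OnePoint

theorem Subgroup.mem_of_orderOf_eq_prime_of_relIndex_lt {G : Type*} [Group G]
    {H K : Subgroup G} {p : ℕ} (hp : p.Prime) (hK₀ : K.relIndex H ≠ 0) (hKp : K.relIndex H < p)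
    {u : G} (hu : u ∈ H) (hup : orderOf u = p) : u ∈ K := by
  have hle : K.relIndex (Subgroup.zpowers u) ≤ K.relIndex H :=
    Subgroup.relIndex_le_of_le_right (Subgroup.zpowers_le.mpr hu) hK₀
  have hdvd : K.relIndex (Subgroup.zpowers u) ∣ p := by
    simpa [Nat.card_zpowers, hup] using K.relIndex_dvd_card (K := Subgroup.zpowers u)
  have h1 : K.relIndex (Subgroup.zpowers u) = 1 :=
    (hp.eq_one_or_self_of_dvd _ hdvd).resolve_right (by omega)
  exact Subgroup.zpowers_le.mp (Subgroup.relIndex_eq_one.mp h1)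

theorem Subgroup.card_stabilizer_inf_mul_ncard_orbit {X : Type*} (H : Subgroup (Perm X)) (x : X) :
    Nat.card ↥(stabilizer (Perm X) x ⊓ H) * (orbit H x).ncard = Nat.card H := by
  rw [← index_stabilizer, ← (stabilizer H x).card_mul_index]
  congr 1
  exact Nat.card_congr ((Equiv.subtypeSubtypeEquivSubtypeInter (· ∈ H) (fun g => g • x = x)).trans
    (Equiv.subtypeEquivRight fun g => and_comm)).symm

lemma ZMod.natCast_ne_zero_of_lt {p n : ℕ} (h0 : 0 < n) (hn : n < p) : (n : ZMod p) ≠ 0 := by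
  rw [Ne, ZMod.natCast_eq_zero_iff]
  exact fun h => absurd (Nat.le_of_dvd h0 h) (by omega)

section FinitePart

variable {X : Type*} [Zero X] {τ : Perm (OnePoint X)}

/-- `τ` on the finite points, with the junk value `0` where `τ z = ∞`. -/
def finitePart (τ : Perm (OnePoint X)) (z : X) : X := (τ z).elim 0 id

lemma finitePart_zero (hτ0 : τ (0 : X) = ∞) : finitePart τ 0 = 0 := by
  simp [finitePart, hτ0]

lemma apply_coe_eq_finitePart (hτ0 : τ (0 : X) = ∞) {z : X} (hz : z ≠ 0) :
    τ z = ↑(finitePart τ z) := by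
  obtain ⟨w, hw⟩ := OnePoint.ne_infty_iff_exists.mp fun h =>
    hz (OnePoint.coe_injective (τ.injective (h.trans hτ0.symm)))
  simp [finitePart, ← hw]

lemma finitePart_ne_zero (hτ0 : τ (0 : X) = ∞) (hτinf : τ ∞ = (0 : X)) {z : X} (hz : z ≠ 0) :
    finitePart τ z ≠ 0 := fun h => by
  have := apply_coe_eq_finitePart hτ0 hz
  rw [h, ← hτinf] at this
  exact OnePoint.coe_ne_infty z (τ.injective this)

lemma finitePart_injective (hτ0 : τ (0 : X) = ∞) (hτinf : τ ∞ = (0 : X)) :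
    Function.Injective (finitePart τ) := by
  have key := fun z => finitePart_ne_zero (z := z) hτ0 hτinf
  intro z w h
  rcases eq_or_ne z 0 with rfl | hz <;> rcases eq_or_ne w 0 with rfl | hw
  · rfl
  · exact absurd (h.symm.trans (finitePart_zero hτ0)) (key w hw)
  · exact absurd (h.trans (finitePart_zero hτ0)) (key z hz)
  · apply OnePoint.coe_injective
    apply τ.injective
    rw [apply_coe_eq_finitePart hτ0 hz, apply_coe_eq_finitePart hτ0 hw, h]

end FinitePart

structure IsKbarMap {F : Type*} [Field F] (e : F) (f : F → F) : Prop where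
  injective : Function.Injective f
  map_neg : ∀ z, f (-z) = -f z
  map_map : ∀ z, f (f z) = e * z
  translate : ∀ b, b ≠ 0 → ∃ D, ∀ y, y ≠ 0 → y ≠ b →
    D * f y = f (f (y - b) + f b) - f (f b)

namespace IsKbarMap

variable {F : Type*} [Field F] {f : F → F} {e : F}

lemma map_zero (hf : IsKbarMap e f) (h2 : (2 : F) ≠ 0) : f 0 = 0 := by
  have h : (2 : F) * f 0 = 0 := by linear_combination (by simpa using hf.map_neg 0 : f 0 = -f 0)
  exact (mul_eq_zero.mp h).resolve_left h2

lemma map_ne_zero (hf : IsKbarMap e f) (h2 : (2 : F) ≠ 0) {z : F} (hz : z ≠ 0) : f z ≠ 0 :=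
  fun h => hz (hf.injective (h.trans (hf.map_zero h2).symm))

lemma map_mul_left (hf : IsKbarMap e f) (z : F) : f (e * z) = e * f z := by
  rw [← hf.map_map z, hf.map_map (f z)]

lemma ne_zero (hf : IsKbarMap e f) : e ≠ 0 := by
  rintro rfl
  have h : f (f 1) = f (f 0) := by rw [hf.map_map, hf.map_map, zero_mul, zero_mul]
  exact one_ne_zero (hf.injective (hf.injective h))

lemma exists_relations (hf : IsKbarMap e f) (h2 : (2 : F) ≠ 0) {α : F} (hα : α ≠ 0) :
    ∃ D₁ D₂ : F, ∀ ω, ω ≠ 0 → ω + α ≠ 0 →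
      D₁ * f (ω + α) = f (f ω + f α) - e * α ∧
      D₂ * f (f ω + f α) = e * f (ω + α) - e * f α := by
  obtain ⟨D₁, hD₁⟩ := hf.translate α hα
  obtain ⟨D₂, hD₂⟩ := hf.translate (f α) (hf.map_ne_zero h2 hα)
  refine ⟨D₁, D₂, fun ω hω hωα => ⟨?_, ?_⟩⟩
  · have h := hD₁ (ω + α) hωα (by simpa using hω)
    rwa [add_sub_cancel_right, hf.map_map] at h
  · have hsum : f ω + f α ≠ 0 := fun h => hωα <| by
      have : f ω = f (-α) := by rw [hf.map_neg]; linear_combination h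
      rw [hf.injective this, neg_add_cancel]
    have h := hD₂ (f ω + f α) hsum (by simpa using hf.map_ne_zero h2 hω)
    rwa [add_sub_cancel_right, hf.map_map, hf.map_map, ← mul_add, hf.map_mul_left,
      hf.map_mul_left] at h

lemma map_mul_map_add_map (hf : IsKbarMap e f) (h2 : (2 : F) ≠ 0) (h3 : (3 : F) ≠ 0)
    {α ω : F} (hα : α ≠ 0) (hω : ω ≠ 0) (hωα : ω + α ≠ 0) :
    f α * f (f ω + f α) = e * α * (f α - f (ω + α)) := by
  obtain ⟨D₁, D₂, hrel⟩ := hf.exists_relations h2 hα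
  -- eliminating `f (f ω + f α)` leaves `(e - D₂ D₁) f (ω + α)` constant in `ω`
  have hconst : ∀ ω, ω ≠ 0 → ω + α ≠ 0 →
      (e - D₂ * D₁) * f (ω + α) = e * f α + D₂ * e * α := fun ω hω hωα => by
    obtain ⟨h₁, h₂⟩ := hrel ω hω hωα
    linear_combination -h₂ - D₂ * h₁
  have hα₁ := hconst α hα (by rw [← two_mul]; exact mul_ne_zero h2 hα)
  have hα₂ := hconst (2 * α) (mul_ne_zero h2 hα)
    (by rw [show 2 * α + α = 3 * α by ring]; exact mul_ne_zero h3 hα)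
  have hdistinct : f (α + α) - f (2 * α + α) ≠ 0 := fun h => hα <| by
    linear_combination -hf.injective (sub_eq_zero.mp h)
  have he : e = D₂ * D₁ := by
    have h : (e - D₂ * D₁) * (f (α + α) - f (2 * α + α)) = 0 := by
      linear_combination hα₁ - hα₂
    linear_combination (mul_eq_zero.mp h).resolve_right hdistinct
  have hfα : f α = -(D₂ * α) := by
    have h : e * (f α + D₂ * α) = 0 := by linear_combination -hα₁ + f (α + α) * he
    linear_combination (mul_eq_zero.mp h).resolve_left hf.ne_zero
  linear_combination -f α * (hrel ω hω hωα).1 + (D₁ * f (ω + α)) * hfα + (α * f (ω + α)) * he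

lemma map_add_mul (hf : IsKbarMap e f) (h2 : (2 : F) ≠ 0) (h3 : (3 : F) ≠ 0)
    {α ω : F} (hα : α ≠ 0) (hω : ω ≠ 0) (hωα : ω + α ≠ 0) :
    (ω * f α - α * f ω) * f (ω + α) = (ω - α) * (f ω * f α) := by
  have hA := hf.map_mul_map_add_map h2 h3 hα hω hωα
  have hB := hf.map_mul_map_add_map h2 h3 hω hα (by rwa [add_comm])
  rw [add_comm (f α), add_comm α] at hB
  have h : e * ((ω * f α - α * f ω) * f (ω + α) - (ω - α) * (f ω * f α)) = 0 := by
    linear_combination f α * hB - f ω * hA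
  linear_combination (mul_eq_zero.mp h).resolve_left hf.ne_zero

theorem eq_div (hf : IsKbarMap e f) (h2 : (2 : F) ≠ 0) (h3 : (3 : F) ≠ 0) (x : F) :
    f x = f 1 / x := by
  rcases eq_or_ne x 0 with rfl | hx
  · rw [div_zero, hf.map_zero h2]
  rcases eq_or_ne x (-1) with rfl | hx₁
  · rw [hf.map_neg, div_neg, div_one]
  have hx1 : x + 1 ≠ 0 := fun h => hx₁ (by linear_combination h)
  have E₁ := hf.map_add_mul h2 h3 one_ne_zero hx hx1
  have E₂ := hf.map_add_mul h2 h3 (neg_ne_zero.mpr one_ne_zero) hx1 (by simpa using hx)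
  rw [show x + 1 + -1 = x by ring, hf.map_neg] at E₂
  have hsum : f 1 * (2 * ((x + 1) * f (x + 1) - x * f x)) = 0 := by linear_combination E₁ + E₂
  have hrec : (x + 1) * f (x + 1) = x * f x := by
    have h := (mul_eq_zero.mp hsum).resolve_left (hf.map_ne_zero h2 one_ne_zero)
    linear_combination (mul_eq_zero.mp h).resolve_left h2
  have h : f x * ((x * f 1 - f x) * x) = f x * ((x - 1) * (x + 1) * f 1) := by
    linear_combination (x + 1) * E₁ - (x * f 1 - f x) * hrec
  rw [eq_div_iff hx]
  linear_combination -mul_left_cancel₀ (hf.map_ne_zero h2 hx) h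

end IsKbarMap

section

variable {p : ℕ}

lemma ptrans_coe (a z : ZMod p) : ptrans p a z = ↑(z + a) := rfl

lemma ptrans_infty (a : ZMod p) : ptrans p a ∞ = ∞ := rfl

lemma ptrans_add (a b : ZMod p) : ptrans p (a + b) = ptrans p a * ptrans p b := by
  ext x
  induction x using OnePoint.rec with
  | infty => rfl
  | coe z => simp only [Perm.mul_apply, ptrans_coe, add_assoc, add_comm b]

lemma ptrans_zero : ptrans p 0 = 1 := by
  ext x
  induction x using OnePoint.rec with
  | infty => rfl
  | coe z => simp [ptrans_coe]

variable (p) in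
def ptransHom : Multiplicative (ZMod p) →* Perm (OnePoint (ZMod p)) where
  toFun a := ptrans p a.toAdd
  map_one' := ptrans_zero
  map_mul' a b := ptrans_add a.toAdd b.toAdd

lemma ptransHom_injective : Function.Injective (ptransHom p) := fun a b h => by
  simpa [ptransHom, ptrans_coe] using congr($h ((0 : ZMod p) : OnePoint (ZMod p)))

lemma card_range_ptransHom [NeZero p] : Nat.card (ptransHom p).range = p := by
  rw [← Nat.card_congr (MonoidHom.ofInjective ptransHom_injective).toEquiv]
  exact Nat.card_zmod p

lemma ptrans_pow (a : ZMod p) (n : ℕ) : ptrans p a ^ n = ptrans p (n * a) := by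
  simpa [ptransHom, nsmul_eq_mul] using (map_pow (ptransHom p) (.ofAdd a) n).symm

lemma orderOf_ptrans_one : orderOf (ptrans p 1) = p := by
  rw [show ptrans p 1 = ptransHom p (.ofAdd 1) from rfl, orderOf_injective _ ptransHom_injective,
    orderOf_ofAdd_eq_addOrderOf, ZMod.addOrderOf_one]

section Dilations

variable [Fact p.Prime]

lemma pmul_coe {a : ZMod p} (ha : a ≠ 0) (z : ZMod p) :
    pmul p a ha z = ↑(a * z) := rfl

lemma pmul_infty {a : ZMod p} (ha : a ≠ 0) : pmul p a ha ∞ = ∞ := rfl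

lemma pmul_mul_pmul {a b : ZMod p} (ha : a ≠ 0) (hb : b ≠ 0) :
    pmul p a ha * pmul p b hb = pmul p (a * b) (mul_ne_zero ha hb) := by
  ext x
  induction x using OnePoint.rec with
  | infty => rfl
  | coe z => simp only [Perm.mul_apply, pmul_coe, mul_assoc]

lemma pmul_eq_one_iff {a : ZMod p} (ha : a ≠ 0) : pmul p a ha = 1 ↔ a = 1 := by
  refine ⟨fun h => by simpa [pmul_coe] using congr($h ((1 : ZMod p) : OnePoint (ZMod p))), ?_⟩
  rintro rfl
  ext x
  induction x using OnePoint.rec with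
  | infty => rfl
  | coe z => simp [pmul_coe]

lemma pmul_inv {a : ZMod p} (ha : a ≠ 0) :
    (pmul p a ha)⁻¹ = pmul p a⁻¹ (inv_ne_zero ha) := by
  rw [inv_eq_iff_mul_eq_one, pmul_mul_pmul, pmul_eq_one_iff, mul_inv_cancel₀ ha]

lemma pmul_comm {a b : ZMod p} (ha : a ≠ 0) (hb : b ≠ 0) :
    pmul p a ha * pmul p b hb = pmul p b hb * pmul p a ha := by
  simp_rw [pmul_mul_pmul, mul_comm a b]

lemma eq_neg_one_of_orderOf_pmul {c : ZMod p} (hc : c ≠ 0)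
    (h : orderOf (pmul p c hc) = 2) : c = -1 := by
  have hsq : c * c = 1 := by
    rw [← pmul_eq_one_iff (mul_ne_zero hc hc), ← pmul_mul_pmul hc hc, ← sq, ← h,
      pow_orderOf_eq_one]
  refine (mul_self_eq_one_iff.mp hsq).resolve_left fun hc1 => ?_
  rw [(pmul_eq_one_iff hc).mpr hc1, orderOf_one] at h
  exact absurd h (by norm_num)

lemma orderOf_pmul_neg_one (h2 : (2 : ZMod p) ≠ 0) :
    orderOf (pmul p (-1) (neg_ne_zero.mpr one_ne_zero)) = 2 := by
  refine orderOf_eq_prime ?_ ?_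
  · rw [sq, pmul_mul_pmul, pmul_eq_one_iff, neg_one_mul, neg_neg]
  · rw [Ne, pmul_eq_one_iff]
    exact fun h => h2 (by linear_combination -h)

lemma negInvPerm_coe {z : ZMod p} (hz : z ≠ 0) : negInvPerm p z = ↑(-z⁻¹) := by
  show negInvFun p (Option.some z) = Option.some (-z⁻¹)
  exact if_neg hz

lemma negInvPerm_coe_zero : negInvPerm p (0 : ZMod p) = ∞ := by
  show negInvFun p (Option.some 0) = Option.none
  exact if_pos rfl

lemma negInvPerm_infty : negInvPerm p ∞ = ((0 : ZMod p) : OnePoint (ZMod p)) := rfl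

lemma negInvPerm_mul_pmul {c : ZMod p} (hc : c ≠ 0) :
    negInvPerm p * pmul p c hc = pmul p c⁻¹ (inv_ne_zero hc) * negInvPerm p := by
  ext x
  induction x using OnePoint.rec with
  | infty => simp [negInvPerm_infty, pmul_infty, pmul_coe]
  | coe z =>
    rcases eq_or_ne z 0 with rfl | hz
    · simp [negInvPerm_coe_zero, pmul_infty, pmul_coe]
    · simp only [Perm.mul_apply, pmul_coe, negInvPerm_coe hz, negInvPerm_coe (mul_ne_zero hc hz),
        mul_inv, mul_neg]

lemma pmul_mul_negInvPerm_mul_pmul {k c : ZMod p} (hk : k ≠ 0) (hc : c ≠ 0) :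
    pmul p k hk * negInvPerm p * pmul p c hc =
      pmul p c⁻¹ (inv_ne_zero hc) * (pmul p k hk * negInvPerm p) := by
  rw [mul_assoc, negInvPerm_mul_pmul, ← mul_assoc, pmul_comm, mul_assoc]

end Dilations

structure IsPSLLike (p : ℕ) (G : Subgroup (Perm (OnePoint (ZMod p)))) : Prop where
  transitive : ∀ x y : OnePoint (ZMod p), ∃ g ∈ G, g x = y
  card : Nat.card G = (p ^ 3 - p) / 2
  ptrans_mem : ∀ a : ZMod p, ptrans p a ∈ G

variable (G : Subgroup (Perm (OnePoint (ZMod p))))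

def stabInfty : Subgroup (Perm (OnePoint (ZMod p))) :=
  stabilizer (Perm (OnePoint (ZMod p))) (∞ : OnePoint (ZMod p)) ⊓ G

def stabZeroInfty : Subgroup (Perm (OnePoint (ZMod p))) :=
  stabilizer (Perm (OnePoint (ZMod p))) ((0 : ZMod p) : OnePoint (ZMod p)) ⊓ stabInfty G

variable {G}

lemma mem_stabZeroInfty {σ : Perm (OnePoint (ZMod p))} :
    σ ∈ stabZeroInfty G ↔ σ ↑(0 : ZMod p) = ↑(0 : ZMod p) ∧ σ ∞ = ∞ ∧ σ ∈ G :=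
  Iff.rfl

lemma IsPSLLike.card_stabInfty_mul [NeZero p] (hG : IsPSLLike p G) :
    Nat.card (stabInfty G) * (p + 1) = Nat.card G := by
  have horbit : orbit G ∞ = Set.univ := Set.eq_univ_of_forall fun y => by
    obtain ⟨g, hg, rfl⟩ := hG.transitive ∞ y
    exact ⟨⟨g, hg⟩, rfl⟩
  have hcard : Nat.card (OnePoint (ZMod p)) = p + 1 := by
    rw [show Nat.card (OnePoint (ZMod p)) = Nat.card (Option (ZMod p)) from rfl,
      Finite.card_option, Nat.card_zmod]
  have h := Subgroup.card_stabilizer_inf_mul_ncard_orbit G ∞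
  rwa [horbit, Set.ncard_univ, hcard] at h

lemma IsPSLLike.card_stabZeroInfty_mul [NeZero p] (hG : IsPSLLike p G) :
    Nat.card (stabZeroInfty G) * p = Nat.card (stabInfty G) := by
  have horbit : orbit (stabInfty G) ((0 : ZMod p) : OnePoint (ZMod p)) =
      Set.range ((↑) : ZMod p → OnePoint (ZMod p)) := by
    ext y
    constructor
    · rintro ⟨g, rfl⟩
      refine OnePoint.ne_infty_iff_exists.mp fun h => OnePoint.coe_ne_infty (0 : ZMod p) ?_
      exact (g : Perm _).injective (h.trans g.2.1.symm)
    · rintro ⟨a, rfl⟩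
      exact ⟨⟨ptrans p a, rfl, hG.ptrans_mem a⟩,
        by simp [Subgroup.smul_def, Perm.smul_def, ptrans_coe]⟩
  have h := Subgroup.card_stabilizer_inf_mul_ncard_orbit (stabInfty G) (0 : ZMod p)
  rwa [horbit, Set.ncard_range_of_injective OnePoint.coe_injective, Nat.card_zmod] at h

lemma IsPSLLike.two_mul_card_stabZeroInfty [NeZero p] (hG : IsPSLLike p G) :
    2 * Nat.card (stabZeroInfty G) = p - 1 := by
  have h : Nat.card (stabZeroInfty G) * (p * (p + 1)) = (p ^ 3 - p) / 2 := by
    rw [← hG.card, ← hG.card_stabInfty_mul, ← hG.card_stabZeroInfty_mul, mul_assoc]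
  obtain ⟨n, rfl⟩ : ∃ n, p = n + 1 := Nat.exists_eq_add_one.mpr (Nat.pos_of_neZero p)
  obtain ⟨Q, hQ⟩ := (Nat.even_mul_succ_self (n + 1)).two_dvd
  have hcube : (n + 1) ^ 3 - (n + 1) = 2 * (n * Q) := by
    rw [Nat.sub_eq_iff_eq_add (by nlinarith), ← mul_assoc, mul_comm 2 n, mul_assoc, ← hQ]
    ring
  rw [hcube, Nat.mul_div_cancel_left _ two_pos, hQ] at h
  simp only [add_tsub_cancel_right]
  have hQ0 : 0 < Q := by nlinarith
  exact Nat.eq_of_mul_eq_mul_right hQ0 (by linarith)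

lemma IsPSLLike.relIndex_range_ptransHom [NeZero p] (hG : IsPSLLike p G) :
    (ptransHom p).range.relIndex (stabInfty G) = Nat.card (stabZeroInfty G) := by
  have hle : (ptransHom p).range ≤ stabInfty G := by
    rintro _ ⟨a, rfl⟩
    exact ⟨rfl, hG.ptrans_mem _⟩
  have h := Subgroup.relIndex_mul_relIndex ⊥ _ _ bot_le hle
  rw [Subgroup.relIndex_bot_left, Subgroup.relIndex_bot_left, card_range_ptransHom,
    ← hG.card_stabZeroInfty_mul, mul_comm] at h
  exact Nat.eq_of_mul_eq_mul_right (Nat.pos_of_neZero p) h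

lemma IsPSLLike.exists_conj_ptrans_one [Fact p.Prime] (hG : IsPSLLike p G)
    {σ : Perm (OnePoint (ZMod p))} (hσ : σ ∈ stabInfty G) :
    ∃ c, σ * ptrans p 1 * σ⁻¹ = ptrans p c := by
  have hp := (Fact.out : p.Prime)
  have hK := hG.two_mul_card_stabZeroInfty
  have := hp.two_le
  have hmem : σ * ptrans p 1 * σ⁻¹ ∈ (ptransHom p).range := by
    refine Subgroup.mem_of_orderOf_eq_prime_of_relIndex_lt hp ?_ ?_
      (mul_mem (mul_mem hσ ⟨rfl, hG.ptrans_mem 1⟩) (inv_mem hσ)) ?_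
    · rw [hG.relIndex_range_ptransHom]
      omega
    · rw [hG.relIndex_range_ptransHom]
      omega
    · rw [← MulAut.conj_apply, MulEquiv.orderOf_eq, orderOf_ptrans_one]
  obtain ⟨a, ha⟩ := hmem
  exact ⟨a.toAdd, ha.symm⟩

lemma IsPSLLike.exists_eq_pmul [Fact p.Prime] (hG : IsPSLLike p G)
    {σ : Perm (OnePoint (ZMod p))} (hσ : σ ∈ stabZeroInfty G) :
    ∃ c, ∃ hc : c ≠ 0, σ = pmul p c hc := by
  obtain ⟨hσ0, hσinf, -⟩ := mem_stabZeroInfty.mp hσ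
  obtain ⟨c, hc⟩ := hG.exists_conj_ptrans_one hσ.2
  -- `σ` normalises the translations, and fixing `0` pins down the scaling factor
  have hσa (a : ZMod p) : σ a = ↑(c * a) := by
    have hconj : σ * ptrans p a = ptrans p (c * a) * σ := by
      rw [← mul_inv_eq_iff_eq_mul, ← ZMod.natCast_zmod_val a, ← mul_one (a.val : ZMod p),
        ← ptrans_pow, ← conj_pow, hc, ptrans_pow, mul_comm, mul_one]
    simpa [ptrans_coe, hσ0] using congr($hconj ((0 : ZMod p) : OnePoint (ZMod p)))
  have hc0 : c ≠ 0 := by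
    rintro rfl
    have h : σ (1 : ZMod p) = σ (0 : ZMod p) := by rw [hσa, hσa, zero_mul, zero_mul]
    exact one_ne_zero (OnePoint.coe_injective (σ.injective h))
  refine ⟨c, hc0, Equiv.ext fun x => ?_⟩
  induction x using OnePoint.rec with
  | infty => exact hσinf
  | coe a => exact hσa a

lemma IsPSLLike.pmul_neg_one_mem [Fact p.Prime] (hG : IsPSLLike p G) (hp1 : p % 4 = 1) :
    pmul p (-1) (neg_ne_zero.mpr one_ne_zero) ∈ G := by
  have heven : 2 ∣ Nat.card (stabZeroInfty G) := by
    have := hG.two_mul_card_stabZeroInfty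
    omega
  obtain ⟨x, hx⟩ := exists_prime_orderOf_dvd_card' 2 heven
  obtain ⟨c, hc, hxc⟩ := hG.exists_eq_pmul x.2
  obtain rfl : c = -1 := eq_neg_one_of_orderOf_pmul hc (by rw [← hxc, Subgroup.orderOf_coe, hx])
  exact hxc ▸ x.2.2.2

variable (G) in
def Kbar : Set (Perm (OnePoint (ZMod p))) :=
  {τ | τ ∈ G ∧ τ (0 : ZMod p) = ∞ ∧ τ ∞ = (0 : ZMod p)}

variable {τ τ' σ : Perm (OnePoint (ZMod p))}

lemma inv_mem_Kbar (hτ : τ ∈ Kbar G) : τ⁻¹ ∈ Kbar G :=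
  ⟨inv_mem hτ.1, by rw [Perm.inv_eq_iff_eq, hτ.2.2], by rw [Perm.inv_eq_iff_eq, hτ.2.1]⟩

lemma mul_mem_stabZeroInfty_of_mem_Kbar (hτ : τ ∈ Kbar G) (hτ' : τ' ∈ Kbar G) :
    τ * τ' ∈ stabZeroInfty G :=
  mem_stabZeroInfty.mpr ⟨by simp [hτ'.2.1, hτ.2.2], by simp [hτ'.2.2, hτ.2.1], mul_mem hτ.1 hτ'.1⟩

lemma mul_mem_Kbar (hτ : τ ∈ Kbar G) (hσ : σ ∈ stabZeroInfty G) : τ * σ ∈ Kbar G := by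
  obtain ⟨hσ0, hσinf, hσG⟩ := mem_stabZeroInfty.mp hσ
  exact ⟨mul_mem hτ.1 hσG, by simp [hσ0, hτ.2.1], by simp [hσinf, hτ.2.2]⟩

lemma IsPSLLike.exists_conj_eq_pmul [Fact p.Prime] (hG : IsPSLLike p G) (hτ : τ ∈ Kbar G)
    (hσ : σ ∈ stabZeroInfty G) : ∃ d, ∃ hd : d ≠ 0, τ * σ * τ⁻¹ = pmul p d hd :=
  hG.exists_eq_pmul (mul_mem_stabZeroInfty_of_mem_Kbar (mul_mem_Kbar hτ hσ) (inv_mem_Kbar hτ))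

lemma IsPSLLike.finitePart_neg [Fact p.Prime] (hG : IsPSLLike p G) (hp1 : p % 4 = 1)
    (h2 : (2 : ZMod p) ≠ 0) (hτ : τ ∈ Kbar G) (z : ZMod p) :
    finitePart τ (-z) = -finitePart τ z := by
  have hν := hG.pmul_neg_one_mem hp1
  obtain ⟨d, hd, h⟩ :=
    hG.exists_conj_eq_pmul hτ (mem_stabZeroInfty.mpr ⟨by simp [pmul_coe], rfl, hν⟩)
  -- conjugation preserves the order 2 of `z ↦ -z`
  obtain rfl : d = -1 := eq_neg_one_of_orderOf_pmul hd <| by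
    rw [← h, ← MulAut.conj_apply, MulEquiv.orderOf_eq, orderOf_pmul_neg_one h2]
  rw [mul_inv_eq_iff_eq_mul] at h
  rcases eq_or_ne z 0 with rfl | hz
  · rw [neg_zero, finitePart_zero hτ.2.1, neg_zero]
  have := congr($h (z : OnePoint (ZMod p)))
  simp only [Perm.mul_apply, pmul_coe, apply_coe_eq_finitePart hτ.2.1 hz,
    apply_coe_eq_finitePart hτ.2.1 (mul_ne_zero (neg_ne_zero.mpr one_ne_zero) hz)] at this
  simpa using OnePoint.coe_injective this

lemma IsPSLLike.exists_finitePart_finitePart [Fact p.Prime] (hG : IsPSLLike p G)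
    (hτ : τ ∈ Kbar G) : ∃ e, ∀ z, finitePart τ (finitePart τ z) = e * z := by
  obtain ⟨e, he, h⟩ := hG.exists_eq_pmul (mul_mem_stabZeroInfty_of_mem_Kbar hτ hτ)
  refine ⟨e, fun z => ?_⟩
  rcases eq_or_ne z 0 with rfl | hz
  · rw [finitePart_zero hτ.2.1, finitePart_zero hτ.2.1, mul_zero]
  have := congr($h (z : OnePoint (ZMod p)))
  rw [Perm.mul_apply, apply_coe_eq_finitePart hτ.2.1 hz, pmul_coe,
    apply_coe_eq_finitePart hτ.2.1 (finitePart_ne_zero hτ.2.1 hτ.2.2 hz)] at this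
  exact OnePoint.coe_injective this

lemma IsPSLLike.finitePart_translate [Fact p.Prime] (hG : IsPSLLike p G) (hτ : τ ∈ Kbar G)
    (hneg : ∀ z, finitePart τ (-z) = -finitePart τ z) {b : ZMod p} (hb : b ≠ 0) :
    ∃ D, ∀ y, y ≠ 0 → y ≠ b → D * finitePart τ y =
      finitePart τ (finitePart τ (y - b) + finitePart τ b) - finitePart τ (finitePart τ b) := by
  set f := finitePart τ
  have hτf {z : ZMod p} (hz : z ≠ 0) : τ z = ↑(f z) := apply_coe_eq_finitePart hτ.2.1 hz
  have hfb : f b ≠ 0 := finitePart_ne_zero hτ.2.1 hτ.2.2 hb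
  set τ' := ptrans p (-f (f b)) * τ * ptrans p (f b) * τ * ptrans p (-b)
  have hτ' : τ' ∈ Kbar G := by
    refine ⟨?_, ?_, ?_⟩
    · simp only [τ']
      exact mul_mem (mul_mem (mul_mem (mul_mem (hG.ptrans_mem _) hτ.1) (hG.ptrans_mem _)) hτ.1)
        (hG.ptrans_mem _)
    · simp [τ', ptrans_coe, hτf (neg_ne_zero.mpr hb), hneg, hτ.2.1, ptrans_infty]
    · simp [τ', ptrans_infty, hτ.2.2, ptrans_coe, hτf hfb]
  obtain ⟨D, _, h⟩ := hG.exists_eq_pmul (mul_mem_stabZeroInfty_of_mem_Kbar hτ' (inv_mem_Kbar hτ))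
  rw [mul_inv_eq_iff_eq_mul] at h
  refine ⟨D, fun y hy hyb => ?_⟩
  have hyb' : y + -b ≠ 0 := by rwa [← sub_eq_add_neg, sub_ne_zero]
  have hsum : f (y + -b) + f b ≠ 0 := fun hs => hy <| by
    have := finitePart_injective hτ.2.1 hτ.2.2 (hneg b ▸ eq_neg_of_add_eq_zero_left hs)
    linear_combination this
  have := congr($h (y : OnePoint (ZMod p)))
  simp only [τ', Perm.mul_apply, ptrans_coe, hτf hyb', hτf hsum, hτf hy, pmul_coe] at this
  rw [sub_eq_add_neg, sub_eq_add_neg]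
  exact (OnePoint.coe_injective this).symm

lemma IsPSLLike.isKbarMap_finitePart [Fact p.Prime] (hG : IsPSLLike p G) (hp1 : p % 4 = 1)
    (h2 : (2 : ZMod p) ≠ 0) (hτ : τ ∈ Kbar G) : ∃ e, IsKbarMap e (finitePart τ) := by
  have hneg := hG.finitePart_neg hp1 h2 hτ
  obtain ⟨e, he⟩ := hG.exists_finitePart_finitePart hτ
  exact ⟨e, finitePart_injective hτ.2.1 hτ.2.2, hneg, he,
    fun b hb => hG.finitePart_translate hτ hneg hb⟩

lemma IsPSLLike.exists_eq_pmul_mul_negInvPerm [Fact p.Prime] (hG : IsPSLLike p G)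
    (hp1 : p % 4 = 1) (hτ : τ ∈ Kbar G) : ∃ k, ∃ hk : k ≠ 0, τ = pmul p k hk * negInvPerm p := by
  have hp5 : 5 ≤ p := by
    have := (Fact.out : p.Prime).two_le
    omega
  have h2 : (2 : ZMod p) ≠ 0 := by
    exact_mod_cast ZMod.natCast_ne_zero_of_lt (p := p) two_pos (by omega)
  have h3 : (3 : ZMod p) ≠ 0 := by
    exact_mod_cast ZMod.natCast_ne_zero_of_lt (p := p) three_pos (by omega)
  obtain ⟨e, hf⟩ := hG.isKbarMap_finitePart hp1 h2 hτ
  refine ⟨_, neg_ne_zero.mpr (hf.map_ne_zero h2 one_ne_zero), Equiv.ext fun x => ?_⟩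
  induction x using OnePoint.rec with
  | infty => simp [hτ.2.2, negInvPerm_infty, pmul_coe]
  | coe z =>
    rcases eq_or_ne z 0 with rfl | hz
    · simp [hτ.2.1, negInvPerm_coe_zero, pmul_infty]
    · rw [apply_coe_eq_finitePart hτ.2.1 hz, hf.eq_div h2 h3, Perm.mul_apply, negInvPerm_coe hz,
        pmul_coe, div_eq_mul_inv, neg_mul_neg]

end

theorem Kbar_inverts_K_general
    (p : ℕ) [Fact p.Prime] (hp1 : p % 4 = 1)
    (G : Subgroup (Equiv.Perm (OnePoint (ZMod p))))
    (htrans : ∀ x y : OnePoint (ZMod p), ∃ g ∈ G, g x = y)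
    (hcard : Nat.card G = (p ^ 3 - p) / 2)
    (htransl : ∀ a : ZMod p, ptrans p a ∈ G) :
    ∀ τ ∈ G, τ (OnePoint.some (0 : ZMod p)) = OnePoint.infty →
      τ OnePoint.infty = OnePoint.some (0 : ZMod p) →
      (∀ σ ∈ G, σ (OnePoint.some (0 : ZMod p)) = OnePoint.some (0 : ZMod p) →
        σ OnePoint.infty = OnePoint.infty → τ * σ * τ⁻¹ = σ⁻¹) ∧
      (∀ a ∈ Rset p, ∀ z : ZMod p, z ≠ 0 →
        τ (OnePoint.some (a * z)) = opSmul p a⁻¹ (τ (OnePoint.some z))) := by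
  intro τ hτG hτ0 hτinf
  have hG : IsPSLLike p G := ⟨htrans, hcard, htransl⟩
  obtain ⟨k, hk, rfl⟩ := hG.exists_eq_pmul_mul_negInvPerm hp1 ⟨hτG, hτ0, hτinf⟩
  refine ⟨fun σ hσG hσ0 hσinf => ?_, fun a ha z _ => ?_⟩
  · obtain ⟨c, hc, rfl⟩ := hG.exists_eq_pmul (mem_stabZeroInfty.mpr ⟨hσ0, hσinf, hσG⟩)
    rw [mul_inv_eq_iff_eq_mul, pmul_inv, pmul_mul_negInvPerm_mul_pmul]
  · exact congr($(pmul_mul_negInvPerm_mul_pmul hk ha.1) (z : OnePoint (ZMod p)))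

theorem Kbar_inverts_K
    (p : ℕ) [Fact p.Prime] (hp2 : p ≠ 2) (hp1 : p % 4 = 1)
    (G : Subgroup (Equiv.Perm (OnePoint (ZMod p))))
    (htrans : ∀ x y : OnePoint (ZMod p), ∃ g ∈ G, g x = y)
    (hcard : Nat.card G = (p ^ 3 - p) / 2)
    (htransl : ∀ a : ZMod p, ptrans p a ∈ G) :
    ∀ τ ∈ G, τ (OnePoint.some (0 : ZMod p)) = OnePoint.infty →
      τ OnePoint.infty = OnePoint.some (0 : ZMod p) →
      (∀ σ ∈ G, σ (OnePoint.some (0 : ZMod p)) = OnePoint.some (0 : ZMod p) →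
        σ OnePoint.infty = OnePoint.infty → τ * σ * τ⁻¹ = σ⁻¹) ∧
      (∀ a ∈ Rset p, ∀ z : ZMod p, z ≠ 0 →
        τ (OnePoint.some (a * z)) = opSmul p a⁻¹ (τ (OnePoint.some z))) :=
  Kbar_inverts_K_general p hp1 G htrans hcard htransl
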